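/- For every integer k ≥ 1, the set of Knott representations of L_k is finite and κ(L_k) = k if k is odd, while κ(L_k) = k + 1 if k is even. -/

import Mathlib

/-- The golden ratio φ = (1+√5)/2. -/
noncomputable def phi : ℝ := (1 + Real.sqrt 5) / 2

/-- `a` is a finite φ-representation of the real number `x`: a finitely supported
function `a : ℤ → {0,1}` with `x = Σ_{i ∈ ℤ} a(i) · φ^i`. -/
def IsPhiRep (x : ℝ) (a : ℤ →₀ ℕ) : Prop :=
  (∀ i, a i ≤ 1) ∧ x = ∑ i ∈ a.support, (a i : ℝ) * phi ^ i

/-- `a` is the canonical φ-representation of `x`: a finite φ-representation with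
no two adjacent digits equal to 1. -/
def IsCanonRep (x : ℝ) (a : ℤ →₀ ℕ) : Prop :=
  IsPhiRep x a ∧ ∀ i : ℤ, a i * a (i + 1) = 0

/-- `a` is a Knott representation of `n`: a finite φ-representation of `n` such that,
writing `j` for the minimal index with `a j = 1`, it is not the case that both
`a (j+1) = 1` and `a (j+2) = 0` (the digit string does not end in 011). -/
def IsKnottRep (n : ℕ) (a : ℤ →₀ ℕ) : Prop :=
  IsPhiRep n a ∧
    ∀ j : ℤ, (a j ≠ 0 ∧ ∀ i : ℤ, a i ≠ 0 → j ≤ i) → ¬(a (j + 1) = 1 ∧ a (j + 2) = 0)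

/-- The set of Knott representations of `n`. -/
def knottSet (n : ℕ) : Set (ℤ →₀ ℕ) := {a | IsKnottRep n a}

/-- Lucas numbers: L₀ = 2, L₁ = 1, L_{n+2} = L_{n+1} + L_n. -/
def lucas : ℕ → ℕ
  | 0 => 2
  | 1 => 1
  | n + 2 => lucas (n + 1) + lucas n

/-!
Identify a representation with the finite set `S ⊆ ℤ` of its digit positions. Since
`φ ^ i ≤ L_k < φ ^ (k + 1)`, every digit is at most `k`. Read from the top, `S` starts with a
run of alternating digits `k - 1, k - 3, …, k - 2m + 1`, and what follows is forced by the
value `L_k = φ ^ k ± φ ^ (-k)`. For `k` odd the rest is the block `[-k - 1, k - 2m - 2]`, once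
we know that no digit lies below `-k - 1`: conjugation `φ ↦ ψ = -φ⁻¹` fixes the integer `L_k`,
and for a set not ending in `011` the conjugate sum `∑ ψ ^ i` is dominated by its lowest term,
so `φ ^ (-j - 2) < L_k < φ ^ k` for every digit `j`. For `k` even the rest is the digit
`k - 2m` followed by an expansion `φ ^ (-k) = φ ^ (-k - 1) + φ ^ (-k - 3) + ⋯ + φ ^ (-k - 2r)`.
The `011` condition excludes exactly `m = k - 1` in the odd case, and leaves `r = 0, m < k` or
`r = 1, m = k` in the even case: `k` resp. `k + 1` representations.
-/

open Real goldenRatio Finset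

lemma phi_eq_goldenRatio : phi = φ := rfl

lemma goldenRatio_zpow_add_two (i : ℤ) : φ ^ (i + 2) = φ ^ (i + 1) + φ ^ i := by
  rw [zpow_add₀ goldenRatio_ne_zero, zpow_add₀ goldenRatio_ne_zero]
  norm_num [goldenRatio_sq]
  ring

lemma goldenRatio_zpow_lt_zpow_iff {i j : ℤ} : φ ^ i < φ ^ j ↔ i < j :=
  zpow_lt_zpow_iff_right₀ one_lt_goldenRatio

lemma goldenRatio_zpow_le_zpow_iff {i j : ℤ} : φ ^ i ≤ φ ^ j ↔ i ≤ j :=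
  zpow_le_zpow_iff_right₀ one_lt_goldenRatio

lemma goldenRatio_zpow_eq_fib (n : ℤ) : φ ^ n = Int.fib n * φ + Int.fib (n - 1) := by
  rw [coe_intFib_eq, coe_intFib_eq, zpow_sub_one₀ goldenRatio_ne_zero,
    zpow_sub_one₀ goldenConj_ne_zero, inv_goldenRatio, inv_goldenConj]
  field_simp
  linear_combination φ ^ n * goldenRatio_sub_goldenConj

lemma goldenConj_zpow_eq_fib (n : ℤ) : ψ ^ n = Int.fib n * ψ + Int.fib (n - 1) := by
  rw [coe_intFib_eq, coe_intFib_eq, zpow_sub_one₀ goldenRatio_ne_zero,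
    zpow_sub_one₀ goldenConj_ne_zero, inv_goldenRatio, inv_goldenConj]
  field_simp
  linear_combination ψ ^ n * goldenRatio_sub_goldenConj

lemma goldenConj_zpow (i : ℤ) : ψ ^ i = (-1) ^ i * φ ^ (-i) := by
  rw [zpow_neg, ← inv_zpow, inv_goldenRatio, ← mul_zpow]
  ring_nf

lemma sum_goldenConj_zpow_eq_of_sum_goldenRatio_zpow_eq {S : Finset ℤ} {n : ℤ}
    (h : ∑ i ∈ S, φ ^ i = n) : ∑ i ∈ S, ψ ^ i = n := by
  simp only [goldenRatio_zpow_eq_fib, goldenConj_zpow_eq_fib, sum_add_distrib, ← sum_mul] at h ⊢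
  have hfib : ∑ i ∈ S, Int.fib i = 0 := by
    by_contra hfib
    have := (goldenRatio_irrational.intCast_mul hfib).add_intCast (∑ i ∈ S, Int.fib (i - 1))
    push_cast at this
    exact Int.not_irrational n (h ▸ this)
  simpa [← Int.cast_sum, hfib] using h

lemma coe_lucas_eq (k : ℕ) : (lucas k : ℝ) = φ ^ k + ψ ^ k := by
  induction k using Nat.twoStepInduction with
  | zero => norm_num [lucas]
  | one => simp [lucas, goldenRatio_add_goldenConj]
  | more n ih ih' =>
    rw [lucas, Nat.cast_add, ih, ih']
    linear_combination -φ ^ n * goldenRatio_sq - ψ ^ n * goldenConj_sq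

lemma coe_lucas_eq_of_even {k : ℕ} (hk : Even k) :
    (lucas k : ℝ) = φ ^ (k : ℤ) + φ ^ (-k : ℤ) := by
  rw [coe_lucas_eq, ← zpow_natCast, ← zpow_natCast, goldenConj_zpow,
    ((Int.even_coe_nat k).mpr hk).neg_one_zpow, one_mul]

lemma coe_lucas_eq_of_odd {k : ℕ} (hk : Odd k) :
    (lucas k : ℝ) = φ ^ (k : ℤ) - φ ^ (-k : ℤ) := by
  rw [coe_lucas_eq, ← zpow_natCast, ← zpow_natCast, goldenConj_zpow,
    ((Int.odd_coe_nat k).mpr hk).neg_one_zpow]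
  ring

lemma coe_lucas_lt_goldenRatio_zpow {k : ℕ} (hk : 1 ≤ k) :
    (lucas k : ℝ) < φ ^ ((k : ℤ) + 1) := by
  have hfib := goldenRatio_zpow_add_two ((k : ℤ) - 1)
  rw [show (k : ℤ) - 1 + 2 = k + 1 by ring, show (k : ℤ) - 1 + 1 = k by ring] at hfib
  have : φ ^ (-k : ℤ) < φ ^ ((k : ℤ) - 1) := goldenRatio_zpow_lt_zpow_iff.mpr (by omega)
  rcases Nat.even_or_odd k with h | h
  · rw [coe_lucas_eq_of_even h]; linarith
  · rw [coe_lucas_eq_of_odd h]; linarith [zpow_pos goldenRatio_pos (-k : ℤ)]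

noncomputable def phiValue (S : Finset ℤ) : ℝ := ∑ i ∈ S, φ ^ i

lemma phiValue_nonneg (S : Finset ℤ) : 0 ≤ phiValue S :=
  sum_nonneg fun i _ => (zpow_pos goldenRatio_pos i).le

lemma phiValue_eq_zero_iff {S : Finset ℤ} : phiValue S = 0 ↔ S = ∅ := by
  rw [phiValue, sum_eq_zero_iff_of_nonneg fun i _ => (zpow_pos goldenRatio_pos i).le]
  simp [eq_empty_iff_forall_notMem, (zpow_pos goldenRatio_pos _).ne']

lemma zpow_le_phiValue {S : Finset ℤ} {i : ℤ} (h : i ∈ S) : φ ^ i ≤ phiValue S :=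
  single_le_sum (fun j _ => (zpow_pos goldenRatio_pos j).le) h

lemma phiValue_insert {S : Finset ℤ} {i : ℤ} (h : i ∉ S) :
    phiValue (insert i S) = φ ^ i + phiValue S :=
  sum_insert h

lemma phiValue_erase {S : Finset ℤ} {i : ℤ} (h : i ∈ S) :
    phiValue (S.erase i) = phiValue S - φ ^ i := by
  rw [← insert_erase h, phiValue_insert (notMem_erase i S), erase_insert (notMem_erase i S)]
  ring

lemma phiValue_union {S T : Finset ℤ} (h : Disjoint S T) :
    phiValue (S ∪ T) = phiValue S + phiValue T :=
  sum_union h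

lemma phiValue_lt_of_forall_le {S : Finset ℤ} {m : ℤ} (hS : ∀ i ∈ S, i ≤ m) :
    phiValue S < φ ^ (m + 2) := by
  induction S using Finset.induction_on_max generalizing m with
  | empty => simpa [phiValue] using zpow_pos goldenRatio_pos _
  | insert a S hlt ih =>
    have hSa : phiValue S < φ ^ (a - 1 + 2) := ih fun i hi => by linarith [hlt i hi]
    rw [show a - 1 + 2 = a + 1 by ring] at hSa
    have ham : φ ^ (a + 2) ≤ φ ^ (m + 2) :=
      goldenRatio_zpow_le_zpow_iff.mpr (by linarith [hS a (mem_insert_self a S)])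
    rw [phiValue_insert fun h => (hlt a h).false]
    linarith [goldenRatio_zpow_add_two a]

lemma phiValue_Icc {a b : ℤ} (hab : a - 1 ≤ b) :
    phiValue (Icc a b) = φ ^ (b + 2) - φ ^ (a + 1) := by
  induction b, hab using Int.leInduction with
  | base => simp [phiValue]; ring_nf
  | succ b hab ih =>
    rw [← insert_Icc_right_eq_Icc_add_one (by omega), phiValue_insert (by simp), ih]
    have h := goldenRatio_zpow_add_two (b + 1)
    rw [show b + 1 + 1 = b + 2 by ring] at h
    linarith

lemma eq_of_subset_of_phiValue_le {S T : Finset ℤ} (hST : S ⊆ T)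
    (h : phiValue T ≤ phiValue S) : S = T := by
  by_contra hne
  obtain ⟨i, hiT, hiS⟩ := exists_of_ssubset (ssubset_of_subset_of_ne hST hne)
  exact h.not_gt <| sum_lt_sum_of_subset hST hiT hiS (zpow_pos goldenRatio_pos i)
    fun j _ _ => (zpow_pos goldenRatio_pos j).le

noncomputable def altDigits (t : ℤ) (m : ℕ) : Finset ℤ :=
  {x ∈ Ioo (t - 2 * m) t | (t - x) % 2 = 1}

@[simp]
lemma mem_altDigits {t x : ℤ} {m : ℕ} :
    x ∈ altDigits t m ↔ t - 2 * m < x ∧ x < t ∧ (t - x) % 2 = 1 := by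
  simp [altDigits, and_assoc]

lemma phiValue_altDigits (t : ℤ) (m : ℕ) :
    phiValue (altDigits t m) = φ ^ t - φ ^ (t - 2 * m) := by
  induction m with
  | zero => simp [phiValue, altDigits]
  | succ m ih =>
    have hins : altDigits t (m + 1) = insert (t - 2 * m - 1) (altDigits t m) := by
      ext x; simp only [mem_altDigits, mem_insert]; push_cast; omega
    rw [hins, phiValue_insert (by simp), ih]
    have h := goldenRatio_zpow_add_two (t - 2 * (m + 1 : ℕ))
    rw [show t - 2 * (m + 1 : ℕ) + 2 = t - 2 * m by push_cast; ring,
      show t - 2 * (m + 1 : ℕ) + 1 = t - 2 * m - 1 by push_cast; ring] at h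
    linarith

lemma phiValue_altDigits_union {R : Finset ℤ} {s : ℤ} {m : ℕ}
    (hR : ∀ i ∈ R, i ≤ s - 2 * m) :
    phiValue (altDigits s m ∪ R) = φ ^ s - φ ^ (s - 2 * m) + phiValue R := by
  rw [phiValue_union, phiValue_altDigits]
  exact disjoint_left.mpr fun x hx hxR => by
    have := hR x hxR
    rw [mem_altDigits] at hx
    omega

lemma exists_eq_altDigits_union (S : Finset ℤ) (s : ℤ) (hS : ∀ i ∈ S, i ≤ s) :
    ∃ (m : ℕ) (R : Finset ℤ), S = altDigits s m ∪ R ∧ (∀ i ∈ R, i ≤ s - 2 * m) ∧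
      (s - 2 * m ∈ R ∨ ∀ i ∈ R, i ≤ s - 2 * m - 2) := by
  induction S using Finset.strongInduction generalizing s with
  | H S ih =>
  by_cases hs : s ∈ S
  · exact ⟨0, S, by simp [altDigits], by simpa using hS, by simp [hs]⟩
  by_cases hs1 : s - 1 ∈ S
  · obtain ⟨m, R, hSR, hR, hend⟩ :=
      ih (S.erase (s - 1)) (erase_ssubset hs1) (s - 2) fun i hi => by
        have := hS i (mem_of_mem_erase hi)
        have := ne_of_mem_erase hi
        grind
    refine ⟨m + 1, R, ?_, fun i hi => by have := hR i hi; push_cast; omega, ?_⟩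
    · rw [← insert_erase hs1, hSR]
      ext x; simp only [mem_insert, mem_union, mem_altDigits]; push_cast; grind
    · rw [show s - 2 * ((m + 1 : ℕ) : ℤ) = s - 2 - 2 * m by push_cast; ring]
      exact hend
  · refine ⟨0, S, by simp [altDigits], by simpa using hS, Or.inr fun i hi => ?_⟩
    have := hS i hi
    grind

noncomputable def zpowDigits (u : ℤ) (r : ℕ) : Finset ℤ := insert (u - 2 * r) (altDigits u r)

@[simp]
lemma mem_zpowDigits {u x : ℤ} {r : ℕ} :
    x ∈ zpowDigits u r ↔ x = u - 2 * r ∨ u - 2 * r < x ∧ x < u ∧ (u - x) % 2 = 1 := by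
  simp [zpowDigits]

lemma phiValue_zpowDigits (u : ℤ) (r : ℕ) : phiValue (zpowDigits u r) = φ ^ u := by
  rw [zpowDigits, phiValue_insert (by simp), phiValue_altDigits]
  ring

lemma exists_eq_zpowDigits_of_phiValue_eq {S : Finset ℤ} {u : ℤ} (hV : phiValue S = φ ^ u) :
    ∃ r, S = zpowDigits u r := by
  have hmax : ∀ i ∈ S, i ≤ u := fun i hi =>
    goldenRatio_zpow_le_zpow_iff.mp (hV ▸ zpow_le_phiValue hi)
  obtain ⟨m, R, rfl, hR, htop | hlow⟩ := exists_eq_altDigits_union S u hmax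
  all_goals rw [phiValue_altDigits_union hR] at hV
  · have hR' : R.erase (u - 2 * m) = ∅ := by
      rw [← phiValue_eq_zero_iff, phiValue_erase htop]
      linarith
    refine ⟨m, ?_⟩
    rw [← insert_erase htop, hR', zpowDigits]
    ext x; simp only [mem_union, mem_insert, notMem_empty]; tauto
  · have := phiValue_lt_of_forall_le hlow
    rw [show u - 2 * m - 2 + 2 = u - 2 * m by ring] at this
    linarith

lemma phiValue_altDigits_union_Icc {t a : ℤ} {m : ℕ} (h : a ≤ t - 2 * m) :
    phiValue (altDigits t m ∪ Icc (a - 1) (t - 2 * m - 2)) = φ ^ t - φ ^ a := by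
  rw [phiValue_altDigits_union fun i hi => by rw [mem_Icc] at hi; omega, phiValue_Icc (by omega)]
  ring_nf

lemma exists_eq_altDigits_union_Icc_of_phiValue_eq_sub {S : Finset ℤ} {t a : ℤ}
    (hmin : ∀ i ∈ S, a - 1 ≤ i) (hmax : ∀ i ∈ S, i ≤ t)
    (hV : phiValue S = φ ^ t - φ ^ a) :
    ∃ m : ℕ, a ≤ t - 2 * m ∧ S = altDigits t m ∪ Icc (a - 1) (t - 2 * m - 2) := by
  obtain ⟨m, R, rfl, hR, htop | hlow⟩ := exists_eq_altDigits_union S t hmax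
  all_goals rw [phiValue_altDigits_union hR] at hV
  · have := phiValue_nonneg (R.erase (t - 2 * m))
    rw [phiValue_erase htop] at this
    linarith [zpow_pos goldenRatio_pos a]
  · have hat : a ≤ t - 2 * m :=
      goldenRatio_zpow_le_zpow_iff.mp (by linarith [phiValue_nonneg R])
    refine ⟨m, hat, congrArg _ (eq_of_subset_of_phiValue_le (fun i hi => ?_) ?_)⟩
    · have := hmin i (mem_union_right _ hi)
      have := hlow i hi
      rw [mem_Icc]
      omega
    · rw [phiValue_Icc (by omega)]
      ring_nf at hV ⊢
      linarith

lemma phiValue_altDigits_union_insert_zpowDigits {t a : ℤ} {m r : ℕ}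
    (h : ∀ i ∈ zpowDigits a r, i < t - 2 * m) :
    phiValue (altDigits t m ∪ insert (t - 2 * m) (zpowDigits a r)) = φ ^ t + φ ^ a := by
  rw [phiValue_altDigits_union, phiValue_insert fun hm => (h _ hm).false, phiValue_zpowDigits]
  · ring
  · intro i hi
    rcases mem_insert.mp hi with rfl | hi
    · rfl
    · exact (h i hi).le

lemma exists_eq_altDigits_union_insert_zpowDigits_of_phiValue_eq_add {S : Finset ℤ} {t a : ℤ}
    (hmax : ∀ i ∈ S, i ≤ t) (hV : phiValue S = φ ^ t + φ ^ a) :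
    ∃ m r : ℕ, (∀ i ∈ zpowDigits a r, i < t - 2 * m) ∧
      S = altDigits t m ∪ insert (t - 2 * m) (zpowDigits a r) := by
  obtain ⟨m, R, rfl, hR, htop | hlow⟩ := exists_eq_altDigits_union S t hmax
  all_goals rw [phiValue_altDigits_union hR] at hV
  · obtain ⟨r, hr⟩ := exists_eq_zpowDigits_of_phiValue_eq (u := a)
      (by rw [phiValue_erase htop]; linarith)
    refine ⟨m, r, fun i hi => ?_, by rw [← hr, insert_erase htop]⟩
    rw [← hr] at hi
    exact lt_of_le_of_ne (hR i (mem_of_mem_erase hi)) (ne_of_mem_erase hi)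
  · have := phiValue_lt_of_forall_le hlow
    rw [show t - 2 * m - 2 + 2 = t - 2 * m by ring] at this
    linarith [zpow_pos goldenRatio_pos a]

def IsKnottSet (S : Finset ℤ) : Prop :=
  ∀ j ∈ S, (∀ i ∈ S, j ≤ i) → j + 1 ∈ S → j + 2 ∈ S

lemma sum_goldenRatio_zpow_neg_lt {R : Finset ℤ} {t : ℤ}
    (h : ∀ i ∈ R, t < i ∧ (i - t) % 2 = 1) : ∑ i ∈ R, φ ^ (-i) < φ ^ (-t) := by
  induction R using Finset.induction_on_min generalizing t with
  | empty => simpa using zpow_pos goldenRatio_pos _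
  | insert a R hlt ih =>
    obtain ⟨hta, hodd⟩ := h a (mem_insert_self a R)
    have hR : ∑ i ∈ R, φ ^ (-i) < φ ^ (-(a + 1)) := ih fun i hi => by
      have := h i (mem_insert_of_mem hi)
      have := hlt i hi
      omega
    have hfib := goldenRatio_zpow_add_two (-a - 1)
    have hle : φ ^ (-a + 1) ≤ φ ^ (-t) := goldenRatio_zpow_le_zpow_iff.mpr (by omega)
    rw [show -a - 1 + 2 = -a + 1 by ring, show -a - 1 + 1 = -a by ring] at hfib
    rw [sum_insert fun ha => (hlt a ha).false]
    rw [show -(a + 1) = -a - 1 by ring] at hR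
    linarith

lemma neg_one_zpow_mul_goldenConj_zpow (i j : ℤ) :
    (-1) ^ j * ψ ^ i = (-1) ^ (i - j) * φ ^ (-i) := by
  rw [goldenConj_zpow, ← mul_assoc, ← zpow_add₀ (by norm_num),
    show j + i = i - j + 2 * j by ring, zpow_add₀ (by norm_num), zpow_mul]
  norm_num

lemma neg_one_zpow_mul_sum_goldenConj_zpow (S : Finset ℤ) (j : ℤ) :
    (-1) ^ j * ∑ i ∈ S, ψ ^ i =
      ∑ i ∈ S with (i - j) % 2 = 0, φ ^ (-i) -
        ∑ i ∈ S with ¬(i - j) % 2 = 0, φ ^ (-i) := by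
  rw [mul_sum, ← sum_filter_add_sum_filter_not S fun i => (i - j) % 2 = 0, sub_eq_add_neg,
    ← sum_neg_distrib]
  congr 1 <;> refine sum_congr rfl fun i hi => ?_ <;> rw [neg_one_zpow_mul_goldenConj_zpow]
  · rw [Even.neg_one_zpow (Int.even_iff.mpr (mem_filter.mp hi).2), one_mul]
  · rw [Odd.neg_one_zpow (Int.odd_iff.mpr (by have := (mem_filter.mp hi).2; omega)), neg_one_mul]

lemma goldenRatio_zpow_neg_sub_two_lt_neg_one_zpow_mul_sum {S : Finset ℤ} {j : ℤ}
    (hS : IsKnottSet S) (hj : j ∈ S) (hmin : ∀ i ∈ S, j ≤ i) :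
    φ ^ (-j - 2) < (-1) ^ j * ∑ i ∈ S, ψ ^ i := by
  rw [neg_one_zpow_mul_sum_goldenConj_zpow]
  set E := S.filter fun i => (i - j) % 2 = 0
  set O := S.filter fun i => ¬(i - j) % 2 = 0
  have hpos : ∀ i ∈ E, 0 ≤ φ ^ (-i) := fun i _ => (zpow_pos goldenRatio_pos _).le
  have hfib := goldenRatio_zpow_add_two (-j - 2)
  rw [show -j - 2 + 2 = -j by ring, show -j - 2 + 1 = -j - 1 by ring] at hfib
  have hlt : φ ^ (-j - 2) < φ ^ (-j - 1) := goldenRatio_zpow_lt_zpow_iff.mpr (by omega)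
  by_cases hj1 : j + 1 ∈ S
  · have hj2 := hS j hj hmin hj1
    have hE : φ ^ (-j) + φ ^ (-j - 2) ≤ ∑ i ∈ E, φ ^ (-i) := by
      have hsub : {j, j + 2} ⊆ E := by
        intro i hi
        rw [mem_insert, mem_singleton] at hi
        rcases hi with rfl | rfl <;> simp [E, *]
      have := sum_le_sum_of_subset_of_nonneg hsub fun i hi _ => hpos i hi
      rwa [sum_pair (by omega), show -(j + 2) = -j - 2 by ring] at this
    have hO : ∑ i ∈ O, φ ^ (-i) < φ ^ (-j) := sum_goldenRatio_zpow_neg_lt fun i hi => by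
      obtain ⟨hiS, hij⟩ := mem_filter.mp hi
      have := hmin i hiS
      omega
    linarith
  · have hE : φ ^ (-j) ≤ ∑ i ∈ E, φ ^ (-i) := single_le_sum hpos (by simp [E, hj])
    have hO : ∑ i ∈ O, φ ^ (-i) < φ ^ (-(j + 2)) := sum_goldenRatio_zpow_neg_lt fun i hi => by
      obtain ⟨hiS, hij⟩ := mem_filter.mp hi
      have := hmin i hiS
      have : i ≠ j + 1 := fun h => hj1 (h ▸ hiS)
      omega
    rw [show -(j + 2) = -j - 2 by ring] at hO
    linarith

lemma goldenRatio_zpow_neg_sub_two_lt_of_phiValue_eq {S : Finset ℤ} {n : ℕ} {j : ℤ}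
    (hS : IsKnottSet S) (hV : phiValue S = n) (hj : j ∈ S) : φ ^ (-j - 2) < n := by
  set j₀ := S.min' ⟨j, hj⟩
  have hψ : ∑ i ∈ S, ψ ^ i = (n : ℤ) :=
    sum_goldenConj_zpow_eq_of_sum_goldenRatio_zpow_eq (by simpa [phiValue] using hV)
  have hsign : (-1) ^ j₀ * ∑ i ∈ S, ψ ^ i ≤ n := by
    rcases Int.even_or_odd j₀ with h | h
    · rw [h.neg_one_zpow, hψ]; simp
    · rw [h.neg_one_zpow, hψ]; simp
  calc φ ^ (-j - 2) ≤ φ ^ (-j₀ - 2) :=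
        goldenRatio_zpow_le_zpow_iff.mpr (by have := S.min'_le j hj; omega)
    _ < (-1) ^ j₀ * ∑ i ∈ S, ψ ^ i :=
        goldenRatio_zpow_neg_sub_two_lt_neg_one_zpow_mul_sum hS (S.min'_mem _)
          fun i hi => S.min'_le i hi
    _ ≤ n := hsign

lemma le_of_mem_of_phiValue_eq_lucas {S : Finset ℤ} {k : ℕ} (hk : 1 ≤ k)
    (hV : phiValue S = lucas k) {i : ℤ} (hi : i ∈ S) : i ≤ k := by
  have := (zpow_le_phiValue hi).trans_lt (hV ▸ coe_lucas_lt_goldenRatio_zpow hk)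
  have := goldenRatio_zpow_lt_zpow_iff.mp this
  omega

noncomputable def oddKnottFamily (k : ℕ) : Finset (Finset ℤ) :=
  ((range (k + 1)).erase (k - 1)).image fun m => altDigits k m ∪ Icc (-k - 1) (k - 2 * m - 2)

lemma mem_oddKnottFamily_iff {k : ℕ} (hk : Odd k) (S : Finset ℤ) :
    S ∈ oddKnottFamily k ↔ phiValue S = lucas k ∧ IsKnottSet S := by
  simp only [oddKnottFamily, mem_image, mem_erase, mem_range]
  constructor
  · rintro ⟨m, ⟨hmk, hm⟩, rfl⟩
    refine ⟨by rw [phiValue_altDigits_union_Icc (by omega), coe_lucas_eq_of_odd hk], ?_⟩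
    intro j hj hmin hj1
    simp only [mem_union, mem_altDigits, mem_Icc] at hj hj1 ⊢
    have := hmin (-k - 1) (by simp only [mem_union, mem_altDigits, mem_Icc]; omega)
    omega
  · rintro ⟨hV, hS⟩
    have hmin : ∀ i ∈ S, -(k : ℤ) - 1 ≤ i := fun i hi => by
      have h := goldenRatio_zpow_neg_sub_two_lt_of_phiValue_eq hS hV hi
      rw [coe_lucas_eq_of_odd hk] at h
      have := goldenRatio_zpow_lt_zpow_iff.mp
        (h.trans_le (sub_le_self _ (zpow_pos goldenRatio_pos _).le))
      omega
    have hmax := fun i hi => le_of_mem_of_phiValue_eq_lucas hk.pos hV (i := i) hi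
    rw [coe_lucas_eq_of_odd hk] at hV
    obtain ⟨m, hm, rfl⟩ := exists_eq_altDigits_union_Icc_of_phiValue_eq_sub hmin hmax hV
    refine ⟨m, ⟨?_, by omega⟩, rfl⟩
    rintro rfl
    have := hk.pos
    have := hS (-k - 1) (by simp only [mem_union, mem_Icc]; omega) hmin
      (by simp only [mem_union, mem_Icc]; omega)
    simp only [mem_union, mem_altDigits, mem_Icc] at this
    omega

noncomputable def evenKnottFamily (k : ℕ) : Finset (Finset ℤ) :=
  insert (altDigits k k ∪ insert ((k : ℤ) - 2 * k) (zpowDigits (-k) 1))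
    ((range k).image fun m => altDigits k m ∪ insert ((k : ℤ) - 2 * m) (zpowDigits (-k) 0))

lemma mem_evenKnottFamily_iff {k : ℕ} (hk1 : 1 ≤ k) (hk : Even k) (S : Finset ℤ) :
    S ∈ evenKnottFamily k ↔ phiValue S = lucas k ∧ IsKnottSet S := by
  simp only [evenKnottFamily, mem_insert, mem_image, mem_range]
  constructor
  · rintro (rfl | ⟨m, hm, rfl⟩)
    · refine ⟨?_, fun j hj hmin hj1 => ?_⟩
      · rw [phiValue_altDigits_union_insert_zpowDigits fun i hi => by
          rw [mem_zpowDigits] at hi; omega, coe_lucas_eq_of_even hk]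
      · have := hmin (-k - 2) (by simp)
        simp only [mem_union, mem_insert, mem_altDigits, mem_zpowDigits] at hj hj1 ⊢
        omega
    · refine ⟨?_, fun j hj hmin hj1 => ?_⟩
      · rw [phiValue_altDigits_union_insert_zpowDigits fun i hi => by
          rw [mem_zpowDigits] at hi; omega, coe_lucas_eq_of_even hk]
      · have := hmin (-k) (by simp)
        simp only [mem_union, mem_insert, mem_altDigits, mem_zpowDigits] at hj hj1 ⊢
        omega
  · rintro ⟨hV, hS⟩
    have hmax := fun i hi => le_of_mem_of_phiValue_eq_lucas hk1 hV (i := i) hi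
    rw [coe_lucas_eq_of_even hk] at hV
    obtain ⟨m, r, hlt, rfl⟩ :=
      exists_eq_altDigits_union_insert_zpowDigits_of_phiValue_eq_add hmax hV
    have hlow := hlt (-k - 2 * r) (by simp)
    rcases Nat.eq_zero_or_pos r with rfl | hr
    · exact Or.inr ⟨m, by have := hlt (-k) (by simp); omega, rfl⟩
    · have htop := hlt (-k - 1) (by rw [mem_zpowDigits]; omega)
      have := hS (-k - 2 * r) (by simp)
        (fun i hi => by
          simp only [mem_union, mem_insert, mem_altDigits, mem_zpowDigits] at hi; omega)
        (by simp only [mem_union, mem_insert, mem_zpowDigits]; omega)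
      simp only [mem_union, mem_insert, mem_altDigits, mem_zpowDigits] at this
      obtain ⟨rfl, rfl⟩ : m = k ∧ r = 1 := by omega
      exact Or.inl rfl

lemma card_oddKnottFamily (k : ℕ) (hk : 1 ≤ k) : (oddKnottFamily k).card = k := by
  rw [oddKnottFamily, card_image_of_injOn, card_erase_of_mem (mem_range.mpr (by omega)),
    card_range, Nat.add_sub_cancel]
  intro m hm m' hm' h
  simp only [coe_erase, coe_range, Set.mem_sdiff, Set.mem_Iio] at hm hm'
  have := Finset.ext_iff.mp h (k - 2 * m - 1)
  simp only [mem_union, mem_altDigits, mem_Icc] at this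
  omega

lemma card_evenKnottFamily (k : ℕ) : (evenKnottFamily k).card = k + 1 := by
  rw [evenKnottFamily, card_insert_of_notMem, card_image_of_injOn, card_range]
  · intro m hm m' hm' h
    simp only [coe_range, Set.mem_Iio] at hm hm'
    have := (Finset.ext_iff.mp h (k - 2 * m)).mp (by simp)
    simp only [mem_union, mem_insert, mem_altDigits, mem_zpowDigits] at this
    omega
  · simp only [mem_image, mem_range, not_exists, not_and]
    intro m hm h
    have := Finset.ext_iff.mp h (-k - 2)
    simp only [mem_union, mem_insert, mem_altDigits, mem_zpowDigits] at this
    omega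

noncomputable def toDigits (S : Finset ℤ) : ℤ →₀ ℕ := Finsupp.indicator S fun _ _ => 1

lemma toDigits_apply (S : Finset ℤ) (i : ℤ) : toDigits S i = if i ∈ S then 1 else 0 := by
  simp [toDigits, Finsupp.indicator_apply]

lemma support_toDigits (S : Finset ℤ) : (toDigits S).support = S := by
  ext i; simp [toDigits_apply]

lemma toDigits_injective : Function.Injective toDigits := fun S T h => by
  rw [← support_toDigits S, h, support_toDigits]

lemma eq_toDigits_support {a : ℤ →₀ ℕ} (ha : ∀ i, a i ≤ 1) :
    a = toDigits a.support := by
  ext i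
  have := ha i
  rw [toDigits_apply]
  split_ifs with hi <;> rw [Finsupp.mem_support_iff] at hi <;> omega

lemma isKnottRep_toDigits_iff (n : ℕ) (S : Finset ℤ) :
    IsKnottRep n (toDigits S) ↔ phiValue S = n ∧ IsKnottSet S := by
  simp only [IsKnottRep, IsPhiRep, support_toDigits, toDigits_apply, phiValue, IsKnottSet]
  constructor
  · rintro ⟨⟨-, hV⟩, hK⟩
    refine ⟨by rw [hV]; exact sum_congr rfl fun i hi => by simp [hi, phi_eq_goldenRatio], ?_⟩
    intro j hj hmin hj1
    by_contra hj2
    exact hK j ⟨by simp [hj], fun i hi => hmin i (by simpa using hi)⟩ (by simp [hj1, hj2])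
  · rintro ⟨hV, hK⟩
    refine ⟨⟨fun i => by split_ifs <;> simp, ?_⟩, ?_⟩
    · rw [← hV]; exact sum_congr rfl fun i hi => by simp [hi, phi_eq_goldenRatio]
    · rintro j ⟨hj, hmin⟩ ⟨hj1, hj2⟩
      simp only [ne_eq, ite_eq_right_iff, one_ne_zero, imp_false, Decidable.not_not,
        ite_eq_left_iff, zero_ne_one] at hj hmin hj1 hj2
      exact hj2 (hK j hj hmin hj1)

lemma knottSet_eq_image (n : ℕ) :
    knottSet n = toDigits '' {S | phiValue S = n ∧ IsKnottSet S} := by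
  ext a
  simp only [knottSet, Set.mem_image]
  constructor
  · intro ha
    have hdig := eq_toDigits_support ha.1.1
    exact ⟨a.support, (isKnottRep_toDigits_iff n _).mp (hdig ▸ ha), hdig.symm⟩
  · rintro ⟨S, hS, rfl⟩
    exact (isKnottRep_toDigits_iff n S).mpr hS

lemma knottSet_finite_and_ncard {n : ℕ} {F : Finset (Finset ℤ)}
    (hF : ∀ S, S ∈ F ↔ phiValue S = n ∧ IsKnottSet S) :
    (knottSet n).Finite ∧ (knottSet n).ncard = F.card := by
  have : knottSet n = toDigits '' F := by
    rw [knottSet_eq_image]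
    congr
    ext S
    exact (hF S).symm
  rw [this, Set.ncard_image_of_injective _ toDigits_injective, Set.ncard_coe_finset]
  exact ⟨F.finite_toSet.image _, rfl⟩

/-- For `k ≥ 1`, the set of Knott representations of `L_k` is finite and
`κ(L_k) = k` if `k` is odd, `κ(L_k) = k + 1` if `k` is even. -/
theorem knott_count_lucas (k : ℕ) (hk : 1 ≤ k) :
    (knottSet (lucas k)).Finite ∧
      (knottSet (lucas k)).ncard = if Odd k then k else k + 1 := by
  rcases Nat.even_or_odd k with hk' | hk'
  · obtain ⟨hfin, hcard⟩ := knottSet_finite_and_ncard (mem_evenKnottFamily_iff hk hk')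
    rw [hcard, card_evenKnottFamily, if_neg (Nat.not_odd_iff_even.mpr hk')]
    exact ⟨hfin, rfl⟩
  · obtain ⟨hfin, hcard⟩ := knottSet_finite_and_ncard (mem_oddKnottFamily_iff hk')
    rw [hcard, card_oddKnottFamily k hk, if_pos hk']
    exact ⟨hfin, rfl⟩
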